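/- arXiv:1411.4288 — 4 statements merged into one kernel-verified Lean document; each statement's English description precedes it below -/
import Mathlib

section
/- Let k ≥ 1, ρ > 0 and λ ∈ ℂ. Suppose φ₁, φ₂ : [0, ∞) → ℂ are continuous on [0, ∞), twice differentiable on (0, ∞), both satisfy φ''(r) + (k/ρ)·coth(r/ρ)·φ'(r) + λ·φ(r) = 0 for all r > 0, and φ₁(0) = φ₂(0) = 1. Then φ₁(r) = φ₂(r) for all r ∈ [0, ∞); i.e., for each complex eigenvalue λ there is at most one radial eigenfunction of the hyperbolic Laplacian that is continuous at the origin and assumes the value 1 there. -/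
/-!
With `σ(r) = sinh(r/ρ)ᵏ` one has `σ' = (k/ρ) coth(r/ρ) σ`, so the equation reads
`(σ φ')' = -λ σ φ`, and for `ψ = φ₁ - φ₂` the flux `σ ψ' + λ ∫₀ʳ σ ψ` is a constant `L`.
Since `k ≥ 1`, `σ(r) = O(r)` at `0`; if `L ≠ 0`, then `Re (L̄ ψ') ≳ 1/r` near `0` and `ψ` would
diverge logarithmically there, contradicting continuity at `0`. So `σ ψ' = -λ ∫₀ʳ σ ψ`, and as `σ`
is increasing, `|ψ'(r)| ≤ |λ| ∫₀ʳ |ψ|`. Together with `ψ(0) = 0` this gives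
`|ψ(r)| ≤ |λ| r ∫₀ʳ |ψ|`, and Grönwall's inequality for `r ↦ ∫₀ʳ |ψ|` forces `ψ = 0`.
-/

open Set Filter Topology Asymptotics ComplexConjugate MeasureTheory

lemma not_tendsto_nhdsGT_zero_of_div_le_deriv {u u' : ℝ → ℝ} {c a : ℝ} (hc : 0 < c)
    (hu : ∀ᶠ t in 𝓝[>] 0, HasDerivAt u (u' t) t ∧ c / t ≤ u' t) :
    ¬ Tendsto u (𝓝[>] 0) (𝓝 a) := by
  intro hlim
  obtain ⟨δ, hδ : 0 < δ, hδu⟩ := mem_nhdsGT_iff_exists_Ioo_subset.mp hu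
  have hmono : MonotoneOn (fun t => u t - c * Real.log t) (Ioo 0 δ) := by
    have hderiv : ∀ t ∈ Ioo 0 δ,
        HasDerivAt (fun t => u t - c * Real.log t) (u' t - c * t⁻¹) t := fun t ht =>
      (hδu ht).1.sub ((Real.hasDerivAt_log ht.1.ne').const_mul c)
    refine monotoneOn_of_hasDerivWithinAt_nonneg (convex_Ioo 0 δ)
      (fun t ht => (hderiv t ht).continuousAt.continuousWithinAt)
      (fun t ht => (hderiv t (interior_subset ht)).hasDerivWithinAt) fun t ht => ?_
    rw [interior_Ioo] at ht
    simpa [div_eq_mul_inv] using (hδu ht).2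
  have htop : Tendsto (fun t => u t - c * Real.log t) (𝓝[>] 0) atTop :=
    hlim.add_atTop (tendsto_neg_atBot_atTop.comp
      (Real.tendsto_log_nhdsGT_zero.const_mul_atBot hc)) |>.congr fun t => by
        simp [sub_eq_add_neg]
  have hb : δ / 2 ∈ Ioo 0 δ := ⟨by positivity, by linarith⟩
  obtain ⟨t, ht_big, ht_small⟩ :=
    ((htop.eventually_gt_atTop (u (δ / 2) - c * Real.log (δ / 2))).and
      (Ioo_mem_nhdsGT (half_pos hδ))).exists
  exact (hmono ⟨ht_small.1, ht_small.2.trans hb.2⟩ hb ht_small.2.le).not_gt ht_big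

lemma eq_zero_of_tendsto_weight_mul_deriv {σ : ℝ → ℝ} {ψ ψ' : ℝ → ℂ} {a L : ℂ}
    (hσ_pos : ∀ t > 0, 0 < σ t) (hσ_isBigO : σ =O[𝓝[>] 0] fun t => t)
    (hψ : Tendsto ψ (𝓝[>] 0) (𝓝 a)) (hψ' : ∀ t > 0, HasDerivAt ψ (ψ' t) t)
    (hL : Tendsto (fun t => σ t * ψ' t) (𝓝[>] 0) (𝓝 L)) : L = 0 := by
  by_contra hL₀
  obtain ⟨K, hK, hσK⟩ := hσ_isBigO.exists_pos
  have hLpos : 0 < ‖L‖ := norm_pos_iff.mpr hL₀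
  -- Near `0`, `Re (conj L * σ ψ') ≥ ‖L‖² / 2`, hence `Re (conj L * ψ') ≥ ‖L‖² / (2 K t)`.
  refine not_tendsto_nhdsGT_zero_of_div_le_deriv (u := fun t => (conj L * ψ t).re)
    (u' := fun t => (conj L * ψ' t).re) (c := ‖L‖ ^ 2 / 2 / K) (by positivity)
    ?_ ((Complex.continuous_re.tendsto _).comp (hψ.const_mul (conj L)))
  filter_upwards [self_mem_nhdsWithin, hσK.bound,
    hL.eventually (Metric.ball_mem_nhds L (half_pos hLpos))] with t (ht : 0 < t) htK htL
  refine ⟨Complex.reCLM.hasFDerivAt.comp_hasDerivAt t ((hψ' t ht).const_mul _), ?_⟩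
  have hσt := hσ_pos t ht
  have hre : ‖L‖ ^ 2 / 2 ≤ (conj L * (σ t * ψ' t)).re := by
    have hnorm : ‖conj L * (σ t * ψ' t - L)‖ ≤ ‖L‖ * (‖L‖ / 2) := by
      rw [norm_mul, RCLike.norm_conj]
      exact mul_le_mul_of_nonneg_left (mem_ball_iff_norm.mp htL).le (norm_nonneg L)
    have hsplit : conj L * (σ t * ψ' t) = ((‖L‖ ^ 2 : ℝ) : ℂ) + conj L * (σ t * ψ' t - L) := by
      push_cast
      rw [← Complex.conj_mul']
      ring
    rw [hsplit, Complex.add_re, Complex.ofReal_re]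
    linarith [(abs_le.mp ((Complex.abs_re_le_norm _).trans hnorm)).1]
  have hσ_re : (conj L * (σ t * ψ' t)).re = σ t * (conj L * ψ' t).re := by
    rw [mul_left_comm, Complex.re_ofReal_mul]
  have htK' : σ t ≤ K * t := by
    simpa [abs_of_pos hσt, abs_of_pos ht] using htK
  rw [div_div, div_le_iff₀ (by positivity)]
  nlinarith

section

variable {E : Type*} [NormedAddCommGroup E] [NormedSpace ℝ E]

lemma hasDerivAt_integral_of_continuousOn_Ici [CompleteSpace E] {g : ℝ → E}
    (hg : ContinuousOn g (Ici 0)) {t : ℝ} (ht : 0 < t) :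
    HasDerivAt (fun t => ∫ s in 0..t, g s) (g t) t :=
  intervalIntegral.integral_hasDerivAt_right
    (hg.mono Icc_subset_Ici_self |>.intervalIntegrable_of_Icc ht.le)
    (hg.mono Ioi_subset_Ici_self |>.stronglyMeasurableAtFilter isOpen_Ioi t ht)
    (hg.continuousAt (Ici_mem_nhds ht))

lemma exists_add_integral_eq_of_hasDerivAt_neg [CompleteSpace E] {F g : ℝ → E}
    (hg : ContinuousOn g (Ici 0)) (hF : ∀ t > 0, HasDerivAt F (-g t) t) :
    ∃ L, ∀ t > 0, F t + ∫ s in 0..t, g s = L := by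
  have hderiv : ∀ t > 0, HasDerivAt (fun t => F t + ∫ s in 0..t, g s) 0 t := fun t ht =>
    ((hF t ht).add (hasDerivAt_integral_of_continuousOn_Ici hg ht)).congr_deriv
      (neg_add_cancel _)
  exact isOpen_Ioi.exists_is_const_of_deriv_eq_zero (convex_Ioi 0).isPreconnected
    (fun t ht => (hderiv t ht).differentiableAt.differentiableWithinAt)
    (fun t ht => (hderiv t ht).deriv)

lemma tendsto_integral_nhdsGT_zero {g : ℝ → E} (hg : ContinuousOn g (Ici 0)) :
    Tendsto (fun t => ∫ s in 0..t, g s) (𝓝[>] 0) (𝓝 0) := by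
  have hcont := intervalIntegral.continuousOn_primitive_interval' (μ := volume) (a := 0)
    (hg.mono Icc_subset_Ici_self |>.intervalIntegrable_of_Icc zero_le_one) (by simp) 0 (by simp)
  have hle : 𝓝[>] (0 : ℝ) ≤ 𝓝[uIcc 0 1] 0 := nhdsWithin_le_of_mem <|
    mem_of_superset (Ioo_mem_nhdsGT zero_lt_one)
      (by rw [uIcc_of_le zero_le_one]; exact Ioo_subset_Icc_self)
  simpa using hcont.tendsto.mono_left hle

lemma norm_image_sub_le_of_norm_hasDerivAt_le_Ioc {f f' : ℝ → E} {a b C : ℝ} (hab : a ≤ b)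
    (hf : ContinuousOn f (Icc a b)) (hf' : ∀ x ∈ Ioc a b, HasDerivAt f (f' x) x)
    (bound : ∀ x ∈ Ioc a b, ‖f' x‖ ≤ C) :
    ‖f b - f a‖ ≤ C * (b - a) := by
  rcases hab.eq_or_lt with rfl | hlt
  · simp
  have hIoc : ∀ x ∈ Ioc a b, ‖f b - f x‖ ≤ C * (b - x) := fun x hx => by
    simpa [Real.norm_of_nonneg (sub_nonneg.mpr hx.2)] using
      (convex_Ioc a b).norm_image_sub_le_of_norm_hasDerivWithin_le
        (fun y hy => (hf' y hy).hasDerivWithinAt) bound hx ⟨hlt, le_rfl⟩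
  refine le_on_closure hIoc ?_ ?_ (closure_Ioc hlt.ne ▸ left_mem_Icc.mpr hab) <;>
    rw [closure_Ioc hlt.ne]
  · exact (continuousOn_const.sub hf).norm
  · fun_prop

lemma eqOn_zero_of_norm_deriv_le_integral {ψ ψ' : ℝ → E} {C : ℝ} (hC : 0 ≤ C)
    (hψ : ContinuousOn ψ (Ici 0)) (hψ₀ : ψ 0 = 0)
    (hψ' : ∀ t > 0, HasDerivAt ψ (ψ' t) t)
    (hbound : ∀ t > 0, ‖ψ' t‖ ≤ C * ∫ s in 0..t, ‖ψ s‖) : EqOn ψ 0 (Ici 0) := by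
  -- Extending `ψ` to the left by `ψ 0` makes `G` below differentiable everywhere.
  set F : ℝ → ℝ := fun t => ‖ψ (max t 0)‖
  have hF : Continuous F := (hψ.comp_continuous (continuous_id.max continuous_const)
    fun t => le_max_right t 0).norm
  set G : ℝ → ℝ := fun t => ∫ s in 0..t, F s
  have hG' (t : ℝ) : HasDerivAt G (F t) t := (hF.integral_hasStrictDerivAt 0 t).hasDerivAt
  have hG_mono : Monotone G := monotone_of_deriv_nonneg (fun t => (hG' t).differentiableAt)
    fun t => (hG' t).deriv ▸ norm_nonneg _
  have hG_eq {t : ℝ} (ht : 0 ≤ t) : ∫ s in 0..t, ‖ψ s‖ = G t :=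
    intervalIntegral.integral_congr fun s hs => by
      rw [uIcc_of_le ht] at hs
      simp [F, max_eq_left hs.1]
  have hψ_le {t : ℝ} (ht : 0 ≤ t) : ‖ψ t‖ ≤ C * t * G t := by
    have hmvt := norm_image_sub_le_of_norm_hasDerivAt_le_Ioc ht (hψ.mono Icc_subset_Ici_self)
      (fun x hx => hψ' x hx.1) fun x hx => (hbound x hx.1).trans <| by
        rw [hG_eq hx.1.le]
        exact mul_le_mul_of_nonneg_left (hG_mono hx.2) hC
    rw [hψ₀, sub_zero, sub_zero] at hmvt
    linarith
  have hG₀ : G 0 = 0 := intervalIntegral.integral_same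
  have hG_nonneg {t : ℝ} (ht : 0 ≤ t) : 0 ≤ G t := hG₀ ▸ hG_mono ht
  intro r hr
  have hGr : ‖G r‖ ≤ 0 := by
    simpa [gronwallBound_ε0_δ0] using norm_le_gronwallBound_of_norm_deriv_right_le
      (δ := 0) (K := C * r) (ε := 0) (fun t _ => (hG' t).continuousAt.continuousWithinAt)
      (fun t _ => (hG' t).hasDerivWithinAt) (by simp [hG₀]) (fun t ht => by
        rw [Real.norm_of_nonneg (norm_nonneg _), Real.norm_of_nonneg (hG_nonneg ht.1), add_zero]
        calc F t = ‖ψ t‖ := by simp [F, max_eq_left ht.1]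
          _ ≤ C * t * G t := hψ_le ht.1
          _ ≤ C * r * G t := by gcongr; exacts [hG_nonneg ht.1, ht.2.le])
      r ⟨hr, le_rfl⟩
  have hψr := hψ_le hr
  rw [norm_le_zero_iff.mp hGr, mul_zero] at hψr
  exact norm_le_zero_iff.mp hψr

end

lemma norm_integral_mul_le_of_monotoneOn {σ : ℝ → ℝ} {ψ : ℝ → ℂ} {a b : ℝ} (hab : a ≤ b)
    (hσ : ContinuousOn σ (Icc a b)) (hσ_mono : MonotoneOn σ (Icc a b)) (hσa : 0 ≤ σ a)
    (hψ : ContinuousOn ψ (Icc a b)) :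
    ‖∫ s in a..b, (σ s : ℂ) * ψ s‖ ≤ σ b * ∫ s in a..b, ‖ψ s‖ := by
  have hmem : ∀ s ∈ Icc a b, σ a ≤ σ s ∧ σ s ≤ σ b := fun s hs =>
    ⟨hσ_mono ⟨le_rfl, hab⟩ hs hs.1, hσ_mono hs ⟨hab, le_rfl⟩ hs.2⟩
  calc ‖∫ s in a..b, (σ s : ℂ) * ψ s‖ ≤ ∫ s in a..b, ‖(σ s : ℂ) * ψ s‖ :=
        intervalIntegral.norm_integral_le_integral_norm hab
    _ ≤ ∫ s in a..b, σ b * ‖ψ s‖ := by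
        refine intervalIntegral.integral_mono_on hab ?_ ?_ fun s hs => ?_
        · exact ((Complex.continuous_ofReal.comp_continuousOn hσ).mul hψ).norm
            |>.intervalIntegrable_of_Icc hab
        · exact (hψ.norm.const_smul (σ b)).intervalIntegrable_of_Icc hab
        · rw [norm_mul, Complex.norm_real, Real.norm_of_nonneg (hσa.trans (hmem s hs).1)]
          exact mul_le_mul_of_nonneg_right (hmem s hs).2 (norm_nonneg _)
    _ = σ b * ∫ s in a..b, ‖ψ s‖ := intervalIntegral.integral_const_mul _ _

theorem eqOn_zero_of_hasDerivAt_weight_mul_deriv {σ : ℝ → ℝ} {ψ ψ' : ℝ → ℂ} {l : ℂ}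
    (hσ : ContinuousOn σ (Ici 0)) (hσ_pos : ∀ t > 0, 0 < σ t) (hσ_mono : MonotoneOn σ (Ici 0))
    (hσ_isBigO : σ =O[𝓝[>] 0] fun t => t) (hψ : ContinuousOn ψ (Ici 0)) (hψ₀ : ψ 0 = 0)
    (hψ' : ∀ t > 0, HasDerivAt ψ (ψ' t) t)
    (hflux : ∀ t > 0, HasDerivAt (fun s => (σ s : ℂ) * ψ' s) (-(l * (σ t * ψ t))) t) :
    EqOn ψ 0 (Ici 0) := by
  have hnhds {β : Type} [TopologicalSpace β] {f : ℝ → β} (hf : ContinuousOn f (Ici 0)) :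
      Tendsto f (𝓝[>] 0) (𝓝 (f 0)) :=
    (hf 0 self_mem_Ici).tendsto.mono_left (nhdsWithin_mono _ Ioi_subset_Ici_self)
  have hlσψ : ContinuousOn (fun t => l * ((σ t : ℂ) * ψ t)) (Ici 0) :=
    continuousOn_const.mul ((Complex.continuous_ofReal.comp_continuousOn hσ).mul hψ)
  obtain ⟨L, hL⟩ := exists_add_integral_eq_of_hasDerivAt_neg hlσψ hflux
  have hL₀ : L = 0 := by
    refine eq_zero_of_tendsto_weight_mul_deriv hσ_pos hσ_isBigO (hnhds hψ) hψ' ?_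
    have hlim := (tendsto_integral_nhdsGT_zero hlσψ).const_sub L
    rw [sub_zero] at hlim
    exact hlim.congr' <| eventually_nhdsWithin_of_forall fun t ht => by
      rw [← hL t ht, add_sub_cancel_right]
  have hσ₀ : 0 ≤ σ 0 :=
    ge_of_tendsto (hnhds hσ) (eventually_nhdsWithin_of_forall fun t ht => (hσ_pos t ht).le)
  refine eqOn_zero_of_norm_deriv_le_integral (norm_nonneg l) hψ hψ₀ hψ' fun t ht => ?_
  have hflux_eq : (σ t : ℂ) * ψ' t = -(l * ∫ s in 0..t, (σ s : ℂ) * ψ s) := by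
    rw [← intervalIntegral.integral_const_mul]
    linear_combination (hL t ht).trans hL₀
  have hσt := hσ_pos t ht
  rw [← mul_le_mul_iff_right₀ hσt]
  calc σ t * ‖ψ' t‖ = ‖(σ t : ℂ) * ψ' t‖ := by
        rw [norm_mul, Complex.norm_real, Real.norm_of_nonneg hσt.le]
    _ = ‖l‖ * ‖∫ s in 0..t, (σ s : ℂ) * ψ s‖ := by rw [hflux_eq, norm_neg, norm_mul]
    _ ≤ ‖l‖ * (σ t * ∫ s in 0..t, ‖ψ s‖) := by
        gcongr
        exact norm_integral_mul_le_of_monotoneOn ht.le (hσ.mono Icc_subset_Ici_self)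
          (hσ_mono.mono Icc_subset_Ici_self) hσ₀ (hψ.mono Icc_subset_Ici_self)
    _ = σ t * (‖l‖ * ∫ s in 0..t, ‖ψ s‖) := by ring

lemma isBigO_sinh_div_pow {k : ℕ} (hk : k ≠ 0) (ρ : ℝ) :
    (fun t => Real.sinh (t / ρ) ^ k) =O[𝓝 0] fun t => t := by
  have hsinh : (fun t => Real.sinh (t / ρ)) =O[𝓝 0] fun t => t := by
    simpa using (((Real.hasDerivAt_sinh _).comp 0 ((hasDerivAt_id 0).div_const ρ))).isBigO_sub
  obtain ⟨n, rfl⟩ := Nat.exists_eq_succ_of_ne_zero hk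
  have hbdd : (fun t => Real.sinh (t / ρ) ^ n) =O[𝓝 0] (fun _ => (1 : ℝ)) :=
    (Continuous.continuousAt (by fun_prop)).isBigO_one ℝ
  simpa [pow_succ'] using hsinh.mul hbdd

lemma monotoneOn_sinh_div_pow (k : ℕ) {ρ : ℝ} (hρ : 0 < ρ) :
    MonotoneOn (fun t => Real.sinh (t / ρ) ^ k) (Ici 0) := fun _ hs _ _ hst =>
  pow_le_pow_left₀ (Real.sinh_nonneg_iff.mpr (div_nonneg hs hρ.le))
    (Real.sinh_le_sinh.mpr (div_le_div_of_nonneg_right hst hρ.le)) k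

lemma hasDerivAt_sinh_div_pow_mul_deriv {k : ℕ} {ρ t : ℝ} {l : ℂ} {φ : ℝ → ℂ} (hρ : ρ ≠ 0)
    (ht : t ≠ 0) (hφ : DifferentiableAt ℝ (deriv φ) t)
    (heq : deriv (deriv φ) t + ((k : ℂ) / (ρ : ℂ)) *
      ((Real.cosh (t / ρ) / Real.sinh (t / ρ) : ℝ) : ℂ) * deriv φ t + l * φ t = 0) :
    HasDerivAt (fun s => ((Real.sinh (s / ρ) ^ k : ℝ) : ℂ) * deriv φ s)
      (-(l * ((Real.sinh (t / ρ) ^ k : ℝ) * φ t))) t := by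
  have hsinh : Real.sinh (t / ρ) ≠ 0 := Real.sinh_ne_zero.mpr (div_ne_zero ht hρ)
  have hσ : HasDerivAt (fun s => Real.sinh (s / ρ) ^ k)
      (Real.sinh (t / ρ) ^ k * (k / ρ * (Real.cosh (t / ρ) / Real.sinh (t / ρ)))) t := by
    refine (((hasDerivAt_id' t).div_const ρ).sinh.fun_pow k).congr_deriv ?_
    rcases k with _ | n
    · simp
    · rw [Nat.add_sub_cancel]
      field_simp
      ring
  refine (hσ.ofReal_comp.mul hφ.hasDerivAt).congr_deriv ?_
  rw [show deriv (deriv φ) t = -(((k : ℂ) / (ρ : ℂ)) *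
      ((Real.cosh (t / ρ) / Real.sinh (t / ρ) : ℝ) : ℂ) * deriv φ t + l * φ t) by
    linear_combination heq]
  push_cast
  ring

/-- Let `k ≥ 1`, `ρ > 0`, `λ ∈ ℂ`.  If `φ₁, φ₂ : [0,∞) → ℂ` are
continuous on `[0,∞)`, twice differentiable on `(0,∞)`, both satisfy
`φ''(r) + (k/ρ)·coth(r/ρ)·φ'(r) + λ·φ(r) = 0` for all `r > 0`, and
`φ₁(0) = φ₂(0) = 1`, then `φ₁ ≡ φ₂` on `[0,∞)`: a radial eigenfunction of the
hyperbolic Laplacian with value `1` at the origin is unique for each eigenvalue. -/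
theorem radial_eigenfunction_unique
    (k : ℕ) (hk : 1 ≤ k) (ρ : ℝ) (hρ : 0 < ρ) (l : ℂ)
    (φ₁ φ₂ : ℝ → ℂ)
    (h₁cont : ContinuousOn φ₁ (Set.Ici 0))
    (h₂cont : ContinuousOn φ₂ (Set.Ici 0))
    (h₁diff : ∀ r : ℝ, 0 < r → DifferentiableAt ℝ φ₁ r ∧ DifferentiableAt ℝ (deriv φ₁) r)
    (h₂diff : ∀ r : ℝ, 0 < r → DifferentiableAt ℝ φ₂ r ∧ DifferentiableAt ℝ (deriv φ₂) r)
    (h₁eq : ∀ r : ℝ, 0 < r →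
      deriv (deriv φ₁) r +
          ((k : ℂ) / (ρ : ℂ)) * ((Real.cosh (r / ρ) / Real.sinh (r / ρ) : ℝ) : ℂ) *
            deriv φ₁ r + l * φ₁ r = 0)
    (h₂eq : ∀ r : ℝ, 0 < r →
      deriv (deriv φ₂) r +
          ((k : ℂ) / (ρ : ℂ)) * ((Real.cosh (r / ρ) / Real.sinh (r / ρ) : ℝ) : ℂ) *
            deriv φ₂ r + l * φ₂ r = 0)
    (h₁zero : φ₁ 0 = 1) (h₂zero : φ₂ 0 = 1) :
    ∀ r ∈ Set.Ici (0 : ℝ), φ₁ r = φ₂ r := by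
  have hflux (t : ℝ) (ht : 0 < t) := (hasDerivAt_sinh_div_pow_mul_deriv hρ.ne' ht.ne'
    (h₁diff t ht).2 (h₁eq t ht)).sub (hasDerivAt_sinh_div_pow_mul_deriv hρ.ne' ht.ne'
    (h₂diff t ht).2 (h₂eq t ht))
  have hzero := eqOn_zero_of_hasDerivAt_weight_mul_deriv (σ := fun t => Real.sinh (t / ρ) ^ k)
    (ψ := φ₁ - φ₂) (ψ' := fun t => deriv φ₁ t - deriv φ₂ t) (l := l)
    (Continuous.continuousOn (by fun_prop))
    (fun t ht => pow_pos (Real.sinh_pos_iff.mpr (div_pos ht hρ)) k)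
    (monotoneOn_sinh_div_pow k hρ) ((isBigO_sinh_div_pow (by omega) ρ).mono nhdsWithin_le_nhds)
    (h₁cont.sub h₂cont) (by simp [h₁zero, h₂zero])
    (fun t ht => (h₁diff t ht).1.hasDerivAt.sub (h₂diff t ht).1.hasDerivAt)
    fun t ht => ((hflux t ht).congr_deriv (by rw [Pi.sub_apply]; ring)).congr_of_eventuallyEq
      (.of_forall fun s => mul_sub _ _ _)
  exact fun r hr => sub_eq_zero.mp (hzero hr)
end

section
/- Let k ≥ 1, let S^k be the Euclidean sphere of radius R > 0 centered at the origin in ℝ^{k+1}, and let x ∈ ℝ^{k+1} with |x| ≠ R. Define ω(x,y) = |(|x|² − |y|²)| / |x − y|² for y ∈ S^k. If α, β ∈ ℂ satisfy α + β = k, then ∫_{S^k} ω(x,y)^α dS_y = ∫_{S^k} ω(x,y)^β dS_y, where the integrals are with respect to the surface measure on S^k. -/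
/-!
Put `p = ‖x‖² - R²` and `ω y = |p| / ‖y - x‖²`, which is `ω(x, y)` for `y` on the sphere `S`. The
signed inversion `Φ y = x + p ‖y - x‖⁻² (y - x)` is an involution of `S` with
`dist (Φ y) (Φ z) = √(ω y ω z) · dist y z` and `ω ∘ Φ = ω⁻¹`. On a level set
`A = {rⁱ ≤ ω < rⁱ⁺¹}` the map `Φ` stretches distances by factors in `[rⁱ, rⁱ⁺¹]`, so both
`μH[k] (Φ '' A)` and `∫_A ω^k` lie between `rⁱᵏ μH[k] A` and `r⁽ⁱ⁺¹⁾ᵏ μH[k] A`. Summing over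
`i ∈ ℤ` and letting `r → 1` gives `Φ_*(μH[k]|S) = ω^k μH[k]|S`, and therefore
`∫ ω^α = ∫ (ω ∘ Φ)^(-α) = ∫ ω^k ω^(-α) = ∫ ω^β`.
-/

open MeasureTheory Metric Set Filter Topology Function
open scoped ENNReal NNReal

theorem ENNReal.le_of_forall_one_lt_le_ofReal_rpow_mul {u v : ℝ≥0∞} {d : ℝ}
    (h : ∀ r : ℝ, 1 < r → u ≤ ENNReal.ofReal r ^ d * v) : u ≤ v := by
  have hfactor : Tendsto (fun r : ℝ => ENNReal.ofReal r ^ d) (𝓝[>] 1) (𝓝 1) := by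
    have := ((ENNReal.continuous_rpow_const (y := d)).comp ENNReal.continuous_ofReal).tendsto 1
    simpa [Function.comp_def] using this.mono_left nhdsWithin_le_nhds
  have hlim : Tendsto (fun r : ℝ => ENNReal.ofReal r ^ d * v) (𝓝[>] 1) (𝓝 v) := by
    simpa using ENNReal.Tendsto.mul_const hfactor (Or.inl one_ne_zero)
  exact ge_of_tendsto hlim (eventually_nhdsWithin_of_forall h)

theorem pairwise_disjoint_Ico_zpow₀ {K : Type*} [Field K] [LinearOrder K] [IsStrictOrderedRing K]
    {r : K} (hr : 1 < r) : Pairwise (Disjoint on fun n : ℤ => Ico (r ^ n) (r ^ (n + 1))) := by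
  intro m n hmn
  refine disjoint_left.mpr fun t hm hn => hmn ?_
  have h₁ := (zpow_lt_zpow_iff_right₀ hr).mp (hm.1.trans_lt hn.2)
  have h₂ := (zpow_lt_zpow_iff_right₀ hr).mp (hn.1.trans_lt hm.2)
  omega

theorem iUnion_inter_preimage_Ico_zpow {α K : Type*} [Field K] [LinearOrder K]
    [IsStrictOrderedRing K] [Archimedean K] {B : Set α} {w : α → K} (hpos : ∀ y ∈ B, 0 < w y)
    {r : K} (hr : 1 < r) : ⋃ i : ℤ, B ∩ w ⁻¹' Ico (r ^ i) (r ^ (i + 1)) = B := by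
  refine Subset.antisymm (iUnion_subset fun i => inter_subset_left) fun y hy => ?_
  obtain ⟨i, hi⟩ := exists_mem_Ico_zpow (hpos y hy) hr
  exact mem_iUnion.mpr ⟨i, hy, hi⟩

section ConformalChangeOfVariables

variable {X Y : Type*} [MetricSpace X] [MetricSpace Y] {Φ : X → Y} {w : X → ℝ} {A : Set X}

theorem lipschitzOnWith_of_dist_eq_sqrt_mul {b : ℝ} (hw : ∀ y ∈ A, 0 ≤ w y ∧ w y ≤ b)
    (hΦ : ∀ y ∈ A, ∀ z ∈ A, dist (Φ y) (Φ z) = √(w y * w z) * dist y z) :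
    LipschitzOnWith b.toNNReal Φ A := by
  refine LipschitzOnWith.of_dist_le_mul fun y hy z hz => ?_
  obtain ⟨hy0, hyb⟩ := hw y hy
  obtain ⟨hz0, hzb⟩ := hw z hz
  have hb : 0 ≤ b := hy0.trans hyb
  have hsqrt : √(w y * w z) ≤ b := by
    calc √(w y * w z) ≤ √(b * b) := Real.sqrt_le_sqrt (mul_le_mul hyb hzb hz0 hb)
      _ = b := Real.sqrt_mul_self hb
  rw [hΦ y hy z hz, Real.coe_toNNReal _ hb]
  exact mul_le_mul_of_nonneg_right hsqrt dist_nonneg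

theorem injOn_of_dist_eq_sqrt_mul (hpos : ∀ y ∈ A, 0 < w y)
    (hΦ : ∀ y ∈ A, ∀ z ∈ A, dist (Φ y) (Φ z) = √(w y * w z) * dist y z) : InjOn Φ A := by
  intro y hy z hz h
  have hsqrt : 0 < √(w y * w z) := Real.sqrt_pos.mpr (mul_pos (hpos y hy) (hpos z hz))
  have hdist := hΦ y hy z hz
  rw [h, dist_self, eq_comm, mul_eq_zero] at hdist
  exact dist_eq_zero.mp (hdist.resolve_left hsqrt.ne')

variable [MeasurableSpace X] [BorelSpace X] [MeasurableSpace Y] [BorelSpace Y] {d : ℝ}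

theorem le_hausdorffMeasure_image_of_le_mul_dist {f : X → Y} {s : Set X} {K : ℝ≥0}
    (h : ∀ x ∈ s, ∀ y ∈ s, dist x y ≤ K * dist (f x) (f y)) (hd : 0 ≤ d) :
    μH[d] s ≤ (K : ℝ≥0∞) ^ d * μH[d] (f '' s) := by
  rcases s.eq_empty_or_nonempty with rfl | ⟨x₀, -⟩
  · simp
  have : Nonempty X := ⟨x₀⟩
  have hinj : InjOn f s := fun x hx y hy hxy => by
    simpa [hxy] using h x hx y hy
  have hinv : LeftInvOn (invFunOn f s) f s := hinj.leftInvOn_invFunOn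
  have hlip : LipschitzOnWith K (invFunOn f s) (f '' s) := by
    refine LipschitzOnWith.of_dist_le_mul ?_
    rintro _ ⟨x, hx, rfl⟩ _ ⟨y, hy, rfl⟩
    rw [hinv hx, hinv hy]
    exact h x hx y hy
  simpa only [hinv.image_image] using hlip.hausdorffMeasure_image_le hd

theorem le_hausdorffMeasure_image_of_dist_eq_sqrt_mul {a : ℝ} (ha : 0 < a)
    (hw : ∀ y ∈ A, a ≤ w y)
    (hΦ : ∀ y ∈ A, ∀ z ∈ A, dist (Φ y) (Φ z) = √(w y * w z) * dist y z) (hd : 0 ≤ d) :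
    ENNReal.ofReal a ^ d * μH[d] A ≤ μH[d] (Φ '' A) := by
  have hdist : ∀ y ∈ A, ∀ z ∈ A, dist y z ≤ (a⁻¹.toNNReal : ℝ) * dist (Φ y) (Φ z) := by
    intro y hy z hz
    have hsqrt : a ≤ √(w y * w z) := by
      calc a = √(a * a) := (Real.sqrt_mul_self ha.le).symm
        _ ≤ √(w y * w z) := Real.sqrt_le_sqrt (mul_le_mul (hw y hy) (hw z hz) ha.le
            (ha.le.trans (hw y hy)))
    rw [hΦ y hy z hz, Real.coe_toNNReal _ (inv_nonneg.mpr ha.le), ← mul_assoc]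
    exact le_mul_of_one_le_left dist_nonneg (by rwa [le_inv_mul_iff₀ ha, mul_one])
  calc ENNReal.ofReal a ^ d * μH[d] A
      ≤ ENNReal.ofReal a ^ d * (ENNReal.ofReal a⁻¹ ^ d * μH[d] (Φ '' A)) :=
        by gcongr; exact le_hausdorffMeasure_image_of_le_mul_dist hdist hd
    _ = μH[d] (Φ '' A) := by
        rw [← mul_assoc, ← ENNReal.mul_rpow_of_nonneg _ _ hd, ← ENNReal.ofReal_mul ha.le,
          mul_inv_cancel₀ ha.ne', ENNReal.ofReal_one, ENNReal.one_rpow, one_mul]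

theorem hausdorffMeasure_image_and_setLIntegral_le_mul (hw : Measurable w) {a r : ℝ} (ha : 0 < a)
    (hr : 0 ≤ r) (hA : ∀ y ∈ A, a ≤ w y ∧ w y ≤ r * a)
    (hΦ : ∀ y ∈ A, ∀ z ∈ A, dist (Φ y) (Φ z) = √(w y * w z) * dist y z) (hd : 0 ≤ d) :
    μH[d] (Φ '' A) ≤ ENNReal.ofReal r ^ d * ∫⁻ y in A, ENNReal.ofReal (w y) ^ d ∂μH[d] ∧
      ∫⁻ y in A, ENNReal.ofReal (w y) ^ d ∂μH[d] ≤ ENNReal.ofReal r ^ d * μH[d] (Φ '' A) := by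
  have hsplit : ENNReal.ofReal (r * a) ^ d = ENNReal.ofReal r ^ d * ENNReal.ofReal a ^ d := by
    rw [ENNReal.ofReal_mul hr, ENNReal.mul_rpow_of_nonneg _ _ hd]
  have himage_le : μH[d] (Φ '' A) ≤ ENNReal.ofReal (r * a) ^ d * μH[d] A :=
    (lipschitzOnWith_of_dist_eq_sqrt_mul (fun y hy => ⟨ha.le.trans (hA y hy).1, (hA y hy).2⟩)
      hΦ).hausdorffMeasure_image_le hd
  have hle_image := le_hausdorffMeasure_image_of_dist_eq_sqrt_mul ha (fun y hy => (hA y hy).1) hΦ hd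
  have hintegral_le : ∫⁻ y in A, ENNReal.ofReal (w y) ^ d ∂μH[d] ≤
      ENNReal.ofReal (r * a) ^ d * μH[d] A := by
    rw [← setLIntegral_const]
    exact setLIntegral_mono measurable_const fun y hy =>
      ENNReal.rpow_le_rpow (ENNReal.ofReal_le_ofReal (hA y hy).2) hd
  have hle_integral : ENNReal.ofReal a ^ d * μH[d] A ≤
      ∫⁻ y in A, ENNReal.ofReal (w y) ^ d ∂μH[d] := by
    rw [← setLIntegral_const]
    exact setLIntegral_mono ((ENNReal.measurable_ofReal.comp hw).pow_const d) fun y hy =>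
      ENNReal.rpow_le_rpow (ENNReal.ofReal_le_ofReal (hA y hy).1) hd
  rw [hsplit, mul_assoc] at himage_le hintegral_le
  exact ⟨himage_le.trans (by gcongr), hintegral_le.trans (by gcongr)⟩

theorem hausdorffMeasure_image_eq_setLIntegral_of_dist_eq_sqrt_mul [PolishSpace X] {B : Set X}
    (hw : Measurable w) (hB : MeasurableSet B) (hpos : ∀ y ∈ B, 0 < w y)
    (hΦ : ∀ y ∈ B, ∀ z ∈ B, dist (Φ y) (Φ z) = √(w y * w z) * dist y z) (hd : 0 ≤ d) :
    μH[d] (Φ '' B) = ∫⁻ y in B, ENNReal.ofReal (w y) ^ d ∂μH[d] := by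
  have hinj := injOn_of_dist_eq_sqrt_mul hpos hΦ
  suffices h : ∀ r : ℝ, 1 < r →
      μH[d] (Φ '' B) ≤ ENNReal.ofReal r ^ d * ∫⁻ y in B, ENNReal.ofReal (w y) ^ d ∂μH[d] ∧
      ∫⁻ y in B, ENNReal.ofReal (w y) ^ d ∂μH[d] ≤ ENNReal.ofReal r ^ d * μH[d] (Φ '' B) from
    le_antisymm (ENNReal.le_of_forall_one_lt_le_ofReal_rpow_mul fun r hr => (h r hr).1)
      (ENNReal.le_of_forall_one_lt_le_ofReal_rpow_mul fun r hr => (h r hr).2)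
  intro r hr
  set A : ℤ → Set X := fun i => B ∩ w ⁻¹' Ico (r ^ i) (r ^ (i + 1))
  have hr0 : 0 < r := zero_lt_one.trans hr
  have hA_sub (i : ℤ) : A i ⊆ B := inter_subset_left
  have hA_meas (i : ℤ) : MeasurableSet (A i) := hB.inter (hw measurableSet_Ico)
  have hA_disj : Pairwise (Disjoint on A) := fun i j hij =>
    ((pairwise_disjoint_Ico_zpow₀ hr hij).preimage w).mono inter_subset_right inter_subset_right
  have hB_eq : B = ⋃ i, A i := (iUnion_inter_preimage_Ico_zpow hpos hr).symm
  have hA_bounds (i : ℤ) : ∀ y ∈ A i, r ^ i ≤ w y ∧ w y ≤ r * r ^ i := fun y hy =>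
    ⟨hy.2.1, by rw [mul_comm, ← zpow_add_one₀ hr0.ne']; exact hy.2.2.le⟩
  have hΦA (i : ℤ) : ∀ y ∈ A i, ∀ z ∈ A i, dist (Φ y) (Φ z) = √(w y * w z) * dist y z :=
    fun y hy z hz => hΦ y (hA_sub i hy) z (hA_sub i hz)
  have himage_meas (i : ℤ) : MeasurableSet (Φ '' A i) :=
    (hA_meas i).image_of_continuousOn_injOn
      (lipschitzOnWith_of_dist_eq_sqrt_mul (fun y hy => ⟨(zpow_pos hr0 i).le.trans
        (hA_bounds i y hy).1, (hA_bounds i y hy).2⟩) (hΦA i)).continuousOn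
      (hinj.mono (hA_sub i))
  have hmeasure : μH[d] (Φ '' B) = ∑' i, μH[d] (Φ '' A i) := by
    conv_lhs => rw [hB_eq, image_iUnion]
    exact measure_iUnion (fun i j hij => (hA_disj hij).image hinj (hA_sub i) (hA_sub j))
      himage_meas
  have hintegral : ∫⁻ y in B, ENNReal.ofReal (w y) ^ d ∂μH[d] =
      ∑' i, ∫⁻ y in A i, ENNReal.ofReal (w y) ^ d ∂μH[d] := by
    conv_lhs => rw [hB_eq]
    exact lintegral_iUnion hA_meas hA_disj _
  have hslab (i : ℤ) := hausdorffMeasure_image_and_setLIntegral_le_mul hw (zpow_pos hr0 i)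
    hr0.le (hA_bounds i) (hΦA i) hd
  rw [hmeasure, hintegral, ← ENNReal.tsum_mul_left, ← ENNReal.tsum_mul_left]
  exact ⟨ENNReal.tsum_le_tsum fun i => (hslab i).1, ENNReal.tsum_le_tsum fun i => (hslab i).2⟩

end ConformalChangeOfVariables

theorem map_restrict_hausdorffMeasure_eq_withDensity {X : Type*} [MetricSpace X]
    [MeasurableSpace X] [BorelSpace X] [PolishSpace X] {Φ : X → X} {w : X → ℝ} {S : Set X} {d : ℝ}
    (hw : Measurable w) (hS : MeasurableSet S) (hpos : ∀ y ∈ S, 0 < w y)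
    (hΦ : ∀ y ∈ S, ∀ z ∈ S, dist (Φ y) (Φ z) = √(w y * w z) * dist y z)
    (hΦ_meas : Measurable Φ) (hmaps : MapsTo Φ S S) (hinv : ∀ y ∈ S, Φ (Φ y) = y) (hd : 0 ≤ d) :
    (μH[d].restrict S).map Φ =
      (μH[d].restrict S).withDensity fun y => ENNReal.ofReal (w y) ^ d := by
  ext A hA
  have hpre : Φ ⁻¹' A ∩ S = Φ '' (A ∩ S) := by
    ext z
    constructor
    · rintro ⟨hzA, hzS⟩
      exact ⟨Φ z, ⟨hzA, hmaps hzS⟩, hinv z hzS⟩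
    · rintro ⟨y, ⟨hyA, hyS⟩, rfl⟩
      exact ⟨by rwa [mem_preimage, hinv y hyS], hmaps hyS⟩
  rw [Measure.map_apply hΦ_meas hA, Measure.restrict_apply (hΦ_meas hA), hpre,
    hausdorffMeasure_image_eq_setLIntegral_of_dist_eq_sqrt_mul hw (hA.inter hS)
      (fun y hy => hpos y hy.2) (fun y hy z hz => hΦ y hy.2 z hz.2) hd,
    withDensity_apply _ hA, Measure.restrict_restrict hA]

section SignedInversion

variable {E : Type*} [NormedAddCommGroup E]

noncomputable def inversionFactor (c : E) (p : ℝ) (y : E) : ℝ := |p| / dist y c ^ 2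

theorem inversionFactor_pos (c : E) {p : ℝ} (hp : p ≠ 0) {y : E} (hy : y ≠ c) :
    0 < inversionFactor c p y :=
  div_pos (abs_pos.mpr hp) (pow_pos (dist_pos.mpr hy) 2)

theorem measurable_inversionFactor [MeasurableSpace E] [BorelSpace E] (c : E) (p : ℝ) :
    Measurable (inversionFactor c p) := by
  unfold inversionFactor
  fun_prop

theorem div_norm_sub_sq_eq_inversionFactor {c y : E} {R : ℝ} (hy : ‖y‖ = R) :
    |‖c‖ ^ 2 - ‖y‖ ^ 2| / ‖c - y‖ ^ 2 = inversionFactor c (‖c‖ ^ 2 - R ^ 2) y := by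
  rw [inversionFactor, hy, norm_sub_rev, dist_eq_norm]

variable [InnerProductSpace ℝ E]

/-- For `p > 0` this is `EuclideanGeometry.inversion c √p`; for `p < 0` it is the inversion of
power `-p` followed by the point reflection in `c`. -/
noncomputable def signedInversion (c : E) (p : ℝ) (y : E) : E := c + (p / ‖y - c‖ ^ 2) • (y - c)

theorem signedInversion_sub_center (c : E) (p : ℝ) (y : E) :
    signedInversion c p y - c = (p / ‖y - c‖ ^ 2) • (y - c) :=
  add_sub_cancel_left _ _

theorem norm_signedInversion_sub_center (c : E) (p : ℝ) {y : E} (hy : y ≠ c) :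
    ‖signedInversion c p y - c‖ = |p| / ‖y - c‖ := by
  have hyc : ‖y - c‖ ≠ 0 := norm_ne_zero_iff.mpr (sub_ne_zero.mpr hy)
  rw [signedInversion_sub_center, norm_smul, Real.norm_eq_abs, abs_div, abs_pow, abs_norm]
  field_simp

theorem dist_signedInversion (c : E) (p : ℝ) {y z : E} (hy : y ≠ c) (hz : z ≠ c) :
    dist (signedInversion c p y) (signedInversion c p z) =
      |p| / (dist y c * dist z c) * dist y z := by
  have hsmul (u : E) : (p / ‖u‖ ^ 2) • u = p • ((1 / ‖u‖) ^ 2 • u) := by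
    rw [smul_smul, div_pow, one_pow, mul_one_div]
  rw [← dist_sub_right _ _ c, signedInversion_sub_center, signedInversion_sub_center, hsmul,
    hsmul, dist_smul₀, dist_div_norm_sq_smul (sub_ne_zero.mpr hy) (sub_ne_zero.mpr hz),
    dist_sub_right, dist_eq_norm y c, dist_eq_norm z c, Real.norm_eq_abs]
  ring

theorem dist_signedInversion_eq_sqrt_mul (c : E) (p : ℝ) {y z : E} (hy : y ≠ c) (hz : z ≠ c) :
    dist (signedInversion c p y) (signedInversion c p z) =
      √(inversionFactor c p y * inversionFactor c p z) * dist y z := by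
  unfold inversionFactor
  rw [dist_signedInversion c p hy hz,
    show |p| / dist y c ^ 2 * (|p| / dist z c ^ 2) = (|p| / (dist y c * dist z c)) ^ 2 by ring,
    Real.sqrt_sq (by positivity)]

theorem signedInversion_signedInversion (c : E) {p : ℝ} (hp : p ≠ 0) {y : E} (hy : y ≠ c) :
    signedInversion c p (signedInversion c p y) = y := by
  have hyc : ‖y - c‖ ≠ 0 := norm_ne_zero_iff.mpr (sub_ne_zero.mpr hy)
  have hcoeff : p / (|p| / ‖y - c‖) ^ 2 * (p / ‖y - c‖ ^ 2) = 1 := by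
    rw [div_pow, sq_abs]
    field_simp
  rw [signedInversion, norm_signedInversion_sub_center c p hy, signedInversion_sub_center,
    smul_smul, hcoeff, one_smul, add_sub_cancel]

theorem inversionFactor_signedInversion (c : E) (p : ℝ) {y : E} (hy : y ≠ c) :
    inversionFactor c p (signedInversion c p y) = (inversionFactor c p y)⁻¹ := by
  rw [inversionFactor, inversionFactor, dist_eq_norm, norm_signedInversion_sub_center c p hy,
    ← dist_eq_norm, inv_div]
  rcases eq_or_ne p 0 with rfl | hp
  · simp
  · have hyc : dist y c ≠ 0 := dist_ne_zero.mpr hy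
    field_simp

theorem signedInversion_mapsTo_sphere {c : E} {R : ℝ} (hc : ‖c‖ ≠ R) :
    MapsTo (signedInversion c (‖c‖ ^ 2 - R ^ 2)) (sphere 0 R) (sphere 0 R) := by
  intro y hy
  rw [mem_sphere_zero_iff_norm] at hy ⊢
  have hyc : ‖y - c‖ ≠ 0 := norm_ne_zero_iff.mpr (sub_ne_zero.mpr fun h => hc (h ▸ hy))
  have hnorm : ‖y - c‖ ^ 2 = R ^ 2 - 2 * inner ℝ y c + ‖c‖ ^ 2 := by
    rw [norm_sub_sq_real, hy]
  have hinner : inner ℝ c (y - c) = inner ℝ y c - ‖c‖ ^ 2 := by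
    rw [inner_sub_right, real_inner_self_eq_norm_sq, real_inner_comm]
  refine (pow_left_inj₀ (norm_nonneg _) (hy ▸ norm_nonneg y) two_ne_zero).mp ?_
  rw [signedInversion, norm_add_sq_real, real_inner_smul_right, norm_smul, hinner, mul_pow,
    Real.norm_eq_abs, sq_abs]
  field_simp
  rw [hnorm]
  ring

theorem measurable_signedInversion [MeasurableSpace E] [BorelSpace E] (c : E) (p : ℝ) :
    Measurable (signedInversion c p) := by
  unfold signedInversion
  fun_prop

end SignedInversion

theorem Complex.ofReal_inv_cpow_neg {t : ℝ} (ht : 0 ≤ t) (γ : ℂ) :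
    ((t⁻¹ : ℝ) : ℂ) ^ (-γ) = (t : ℂ) ^ γ := by
  rw [Complex.ofReal_inv, Complex.inv_cpow _ _ (by
    rw [Complex.arg_ofReal_of_nonneg ht]; exact Real.pi_pos.ne), Complex.cpow_neg, inv_inv]

theorem Complex.real_rpow_smul_cpow {t : ℝ} (ht : 0 < t) (s : ℝ) (γ : ℂ) :
    t ^ s • (t : ℂ) ^ γ = (t : ℂ) ^ ((s : ℂ) + γ) := by
  rw [Complex.real_smul, Complex.ofReal_cpow ht.le,
    Complex.cpow_add _ _ (Complex.ofReal_ne_zero.mpr ht.ne')]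

theorem setIntegral_cpow_eq_of_map_eq_withDensity {X : Type*} [MeasurableSpace X]
    {μ : Measure X} {S : Set X} (hS : MeasurableSet S) {Φ : X → X} (hΦ : Measurable Φ)
    {w : X → ℝ} (hw : Measurable w) (hpos : ∀ y ∈ S, 0 < w y)
    (hw_inv : ∀ y ∈ S, w (Φ y) = (w y)⁻¹) {d : ℝ}
    (hmap : (μ.restrict S).map Φ = (μ.restrict S).withDensity fun y => ENNReal.ofReal (w y) ^ d)
    {α β : ℂ} (hαβ : α + β = d) :
    ∫ y in S, (w y : ℂ) ^ α ∂μ = ∫ y in S, (w y : ℂ) ^ β ∂μ := by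
  have hfinite : ∀ᵐ y ∂μ.restrict S, ENNReal.ofReal (w y) ^ d < ∞ :=
    (ae_restrict_mem hS).mono fun y hy => (ENNReal.rpow_ne_top_of_nonneg'
      (ENNReal.ofReal_pos.mpr (hpos y hy)) ENNReal.ofReal_ne_top).lt_top
  calc ∫ y in S, (w y : ℂ) ^ α ∂μ
      = ∫ y in S, (w (Φ y) : ℂ) ^ (-α) ∂μ :=
        setIntegral_congr_fun hS fun y hy => by
          rw [hw_inv y hy, Complex.ofReal_inv_cpow_neg (hpos y hy).le]
    _ = ∫ z, (w z : ℂ) ^ (-α) ∂(μ.restrict S).map Φ :=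
        (integral_map hΦ.aemeasurable
          ((Complex.measurable_ofReal.comp hw).pow_const (-α)).aestronglyMeasurable).symm
    _ = ∫ y in S, (ENNReal.ofReal (w y) ^ d).toReal • (w y : ℂ) ^ (-α) ∂μ := by
        rw [hmap, integral_withDensity_eq_integral_toReal_smul (by fun_prop) hfinite]
    _ = ∫ y in S, (w y : ℂ) ^ β ∂μ :=
        setIntegral_congr_fun hS fun y hy => by
          rw [← ENNReal.toReal_rpow, ENNReal.toReal_ofReal (hpos y hy).le,
            Complex.real_rpow_smul_cpow (hpos y hy), ← hαβ]
          ring_nf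

theorem omega_sphere_integral_eq_of_add_eq_general
    (k : ℕ) (R : ℝ) (hR : 0 < R)
    (x : EuclideanSpace ℝ (Fin (k + 1))) (hx : ‖x‖ ≠ R)
    (α β : ℂ) (hαβ : α + β = (k : ℂ)) :
    ∫ y in Metric.sphere (0 : EuclideanSpace ℝ (Fin (k + 1))) R,
        ((|‖x‖ ^ 2 - ‖y‖ ^ 2| / ‖x - y‖ ^ 2 : ℝ) : ℂ) ^ α ∂μH[(k : ℝ)] =
      ∫ y in Metric.sphere (0 : EuclideanSpace ℝ (Fin (k + 1))) R,
        ((|‖x‖ ^ 2 - ‖y‖ ^ 2| / ‖x - y‖ ^ 2 : ℝ) : ℂ) ^ β ∂μH[(k : ℝ)] := by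
  set S := sphere (0 : EuclideanSpace ℝ (Fin (k + 1))) R
  set p := ‖x‖ ^ 2 - R ^ 2
  have hp : p ≠ 0 :=
    sub_ne_zero.mpr fun h => hx ((pow_left_inj₀ (norm_nonneg _) hR.le two_ne_zero).mp h)
  have hS_ne (y) (hy : y ∈ S) : y ≠ x := fun h => hx (h ▸ mem_sphere_zero_iff_norm.mp hy)
  have hω (γ : ℂ) : ∫ y in S, ((|‖x‖ ^ 2 - ‖y‖ ^ 2| / ‖x - y‖ ^ 2 : ℝ) : ℂ) ^ γ ∂μH[(k : ℝ)] =
      ∫ y in S, (inversionFactor x p y : ℂ) ^ γ ∂μH[(k : ℝ)] :=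
    setIntegral_congr_fun isClosed_sphere.measurableSet fun y hy => by
      rw [div_norm_sub_sq_eq_inversionFactor (mem_sphere_zero_iff_norm.mp hy)]
  have hmap := map_restrict_hausdorffMeasure_eq_withDensity (measurable_inversionFactor x p)
    isClosed_sphere.measurableSet (fun y hy => inversionFactor_pos x hp (hS_ne y hy))
    (fun y hy z hz => dist_signedInversion_eq_sqrt_mul x p (hS_ne y hy) (hS_ne z hz))
    (measurable_signedInversion x p) (signedInversion_mapsTo_sphere hx)
    (fun y hy => signedInversion_signedInversion x hp (hS_ne y hy)) (Nat.cast_nonneg k)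
  rw [hω, hω]
  exact setIntegral_cpow_eq_of_map_eq_withDensity isClosed_sphere.measurableSet
    (measurable_signedInversion x p) (measurable_inversionFactor x p)
    (fun y hy => inversionFactor_pos x hp (hS_ne y hy))
    (fun y hy => inversionFactor_signedInversion x p (hS_ne y hy)) hmap (by exact_mod_cast hαβ)

/-- Statement (A) of the One Radius Theorem for `ω`.
Let `S^k` be the Euclidean sphere of radius `R > 0` about the origin in `ℝ^{k+1}`
(`k ≥ 1`), with its surface measure (the `k`-dimensional Hausdorff measure), and let
`x` satisfy `|x| ≠ R`.  With `ω(x,y) = ||x|² − |y|²| / |x − y|²`, if `α + β = k` then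
`∫_{S^k} ω(x,y)^α dS_y = ∫_{S^k} ω(x,y)^β dS_y`. -/
theorem omega_sphere_integral_eq_of_add_eq
    (k : ℕ) (hk : 1 ≤ k) (R : ℝ) (hR : 0 < R)
    (x : EuclideanSpace ℝ (Fin (k + 1))) (hx : ‖x‖ ≠ R)
    (α β : ℂ) (hαβ : α + β = (k : ℂ)) :
    ∫ y in Metric.sphere (0 : EuclideanSpace ℝ (Fin (k + 1))) R,
        ((|‖x‖ ^ 2 - ‖y‖ ^ 2| / ‖x - y‖ ^ 2 : ℝ) : ℂ) ^ α ∂μH[(k : ℝ)] =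
      ∫ y in Metric.sphere (0 : EuclideanSpace ℝ (Fin (k + 1))) R,
        ((|‖x‖ ^ 2 - ‖y‖ ^ 2| / ‖x - y‖ ^ 2 : ℝ) : ℂ) ^ β ∂μH[(k : ℝ)] :=
  omega_sphere_integral_eq_of_add_eq_general k R hR x hx α β hαβ
end

section
/- Let κ < 0, k > 0 and p > 0 be real constants and define Φ : ℂ → ℂ by Φ(α) = −κ·(αk − α²). Then the image under Φ of the horizontal strip {α ∈ ℂ : Im α ∈ [−p, p]} equals the closed region inside the parabola {μ ∈ ℂ : Re μ ≤ −κ·(p² + k²/4) + (Im μ)²/(4κp²)}. That is, for μ ∈ ℂ, there exists α with Im α ∈ [−p, p] and Φ(α) = μ if and only if Re μ ≤ −κ·(p² + k²/4) + (Im μ)²/(4κp²). -/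
open Complex Set

set_option maxHeartbeats 1600000 in
/-- Let `κ < 0`, `k > 0`, `p > 0` be real constants and
`Φ(α) = −κ(αk − α²)`.  Then the image under `Φ` of the horizontal strip
`{α : Im α ∈ [−p, p]}` is exactly the closed region inside the parabola
`{μ : Re μ ≤ −κ(p² + k²/4) + (Im μ)²/(4κp²)}`. -/
theorem strip_image_is_parabola_region
    (κ k p : ℝ) (hκ : κ < 0) (hk : 0 < k) (hp : 0 < p)
    (Φ : ℂ → ℂ) (hΦ : ∀ α : ℂ, Φ α = -(κ : ℂ) * (α * (k : ℂ) - α ^ 2)) :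
    ∀ μ : ℂ,
      (∃ α : ℂ, α.im ∈ Set.Icc (-p) p ∧ Φ α = μ) ↔
        μ.re ≤ -κ * (p ^ 2 + k ^ 2 / 4) + μ.im ^ 2 / (4 * κ * p ^ 2) := by
  intro μ
  have hκ' : κ ≠ 0 := ne_of_lt hκ
  have hp' : p ≠ 0 := ne_of_gt hp
  have hp2 : 0 < p ^ 2 := by positivity
  have hden : 4 * κ * p ^ 2 < 0 := by nlinarith
  constructor
  · rintro ⟨α, ⟨h1, h2⟩, rfl⟩
    rw [hΦ]
    obtain ⟨x, y⟩ := α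
    simp only [Set.mem_Icc] at *
    have hre : (-(κ : ℂ) * (Complex.mk x y * (k : ℂ) - Complex.mk x y ^ 2)).re
        = -κ * (x * k - (x ^ 2 - y ^ 2)) := by
      simp [Complex.mul_re, Complex.mul_im, pow_two]
    have him : (-(κ : ℂ) * (Complex.mk x y * (k : ℂ) - Complex.mk x y ^ 2)).im
        = -κ * (y * k - 2 * x * y) := by
      simp [Complex.mul_re, Complex.mul_im, pow_two]
      exact Or.inl (by ring)
    rw [hre, him]
    rw [← sub_nonneg]
    have key : -κ * (p ^ 2 + k ^ 2 / 4) + (-κ * (y * k - 2 * x * y)) ^ 2 / (4 * κ * p ^ 2)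
        - (-κ * (x * k - (x ^ 2 - y ^ 2)))
        = (-κ) * ((p ^ 2 - y ^ 2) * ((x - k / 2) ^ 2 / p ^ 2 + 1)) := by
      field_simp
      ring
    rw [key]
    have hy : y ^ 2 ≤ p ^ 2 := by nlinarith
    have ht : 0 ≤ (x - k / 2) ^ 2 / p ^ 2 + 1 := by positivity
    exact mul_nonneg (by linarith) (mul_nonneg (by linarith) ht)
  · intro h
    set a := μ.re / κ + k ^ 2 / 4 with ha
    set b := μ.im / κ with hb
    clear_value a b
    have hkey : b ^ 2 ≤ 4 * p ^ 2 * a + 4 * p ^ 4 := by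
      have h2 : μ.re + κ * (p ^ 2 + k ^ 2 / 4) ≤ μ.im ^ 2 / (4 * κ * p ^ 2) := by
        linarith
      rw [le_div_iff_of_neg hden] at h2
      have hκ2 : (0:ℝ) < κ ^ 2 := by positivity
      rw [ha, hb, div_pow, div_le_iff₀ hκ2]
      have hc : μ.re / κ * κ ^ 2 = μ.re * κ := by field_simp
      nlinarith [h2, hc]
    have hbnn : (0:ℝ) ≤ b ^ 2 := sq_nonneg b
    have hap : -p ^ 2 ≤ a := by nlinarith
    set r := Real.sqrt (a ^ 2 + b ^ 2) with hrdef
    have hr0 : 0 ≤ r := Real.sqrt_nonneg _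
    have hr2 : r ^ 2 = a ^ 2 + b ^ 2 := Real.sq_sqrt (by positivity)
    have hra : |a| ≤ r := by
      rw [← Real.sqrt_sq_eq_abs]
      exact Real.sqrt_le_sqrt (by nlinarith)
    have hra1 : -a ≤ r := by linarith [(abs_le.mp hra).1]
    have hra2 : a ≤ r := le_trans (le_abs_self a) hra
    have hrle : r ≤ a + 2 * p ^ 2 := by
      have h1 : a ^ 2 + b ^ 2 ≤ (a + 2 * p ^ 2) ^ 2 := by nlinarith
      have h2 : 0 ≤ a + 2 * p ^ 2 := by nlinarith
      calc r ≤ Real.sqrt ((a + 2 * p ^ 2) ^ 2) := Real.sqrt_le_sqrt h1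
        _ = a + 2 * p ^ 2 := by rw [Real.sqrt_sq h2]
    clear_value r
    set x := Real.sqrt ((r + a) / 2) with hxdef
    set s : ℝ := if b < 0 then -1 else 1 with hsdef
    set y := s * Real.sqrt ((r - a) / 2) with hydef
    have hs2 : s ^ 2 = 1 := by
      rw [hsdef]; split <;> norm_num
    have hx2 : x ^ 2 = (r + a) / 2 := Real.sq_sqrt (by linarith)
    have hy2 : y ^ 2 = (r - a) / 2 := by
      rw [hydef, mul_pow, hs2, one_mul, Real.sq_sqrt (by linarith)]
    have hxy : 2 * x * y = b := by
      have hprod : x * Real.sqrt ((r - a) / 2) = |b| / 2 := by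
        rw [hxdef, ← Real.sqrt_mul (by linarith)]
        have he : (r + a) / 2 * ((r - a) / 2) = b ^ 2 / 4 := by linear_combination hr2 / 4
        rw [he, show b ^ 2 / 4 = (|b| / 2) ^ 2 by rw [div_pow, _root_.sq_abs]; norm_num]
        exact Real.sqrt_sq (by positivity)
      rw [hydef,
        show 2 * x * (s * Real.sqrt ((r - a) / 2)) = s * (2 * (x * Real.sqrt ((r - a) / 2))) by ring,
        hprod, hsdef]
      rcases lt_or_ge b 0 with hbneg | hbpos
      · rw [if_pos hbneg, abs_of_neg hbneg]; ring
      · rw [if_neg (not_lt.mpr hbpos), _root_.abs_of_nonneg hbpos]; ring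
    have hysq : y ^ 2 ≤ p ^ 2 := by rw [hy2]; linarith
    clear_value x s y
    refine ⟨(↑(x + k / 2) + ↑y * I : ℂ), ?_, ?_⟩
    · rw [Set.mem_Icc]
      have him1 : ((↑(x + k / 2) + ↑y * I : ℂ)).im = y := by simp
      rw [him1]
      constructor
      · nlinarith [hysq, sq_nonneg (y + p)]
      · nlinarith [hysq, sq_nonneg (y - p)]
    · rw [hΦ]
      have hxya : x ^ 2 - y ^ 2 = a := by rw [hx2, hy2]; ring
      apply Complex.ext
      · simp [Complex.mul_re, Complex.mul_im, pow_two]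
        have hmre : μ.re = κ * a - κ * k ^ 2 / 4 := by rw [ha]; field_simp; ring
        rw [hmre, ← hxya]
        ring
      · simp [Complex.mul_re, Complex.mul_im, pow_two]
        have hmim : μ.im = κ * b := by rw [hb]; field_simp
        rw [hmim, ← hxy]
        ring
end

section
/- Let k ≥ 1, ρ > 0, and set κ = −1/ρ². Let μ, ν be real numbers with μ ≤ −κk²/4 = k²/(4ρ²), ν ≤ k²/(4ρ²), and μ ≠ ν. Suppose φ_μ, φ_ν : [0, ∞) → ℂ are continuous on [0, ∞), twice differentiable on (0, ∞), satisfy φ_μ''(r) + (k/ρ)·coth(r/ρ)·φ_μ'(r) + μ·φ_μ(r) = 0 and φ_ν''(r) + (k/ρ)·coth(r/ρ)·φ_ν'(r) + ν·φ_ν(r) = 0 for all r > 0, and φ_μ(0) = φ_ν(0) = 1. Then φ_μ(r) ≠ φ_ν(r) for every r ∈ (0, ∞). Consequently, if two such eigenfunctions with real eigenvalues at most k²/(4ρ²) agree at a single point r₀ > 0, then μ = ν and φ_μ ≡ φ_ν. -/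
/-!
With `P r = sinh (r / ρ) ^ k` the equation reads `(P φ')' = -λ P φ`, so `P φ'` has a limit at `0`.
That limit vanishes: `P r = O(r)`, so otherwise `|φ'| ≳ 1 / r` and `φ` would blow up
logarithmically at `0`.

If `λ ≤ a²` with `a = k / (2ρ)`, a solution with `φ 0 > 0` stays positive: `e^{-ar} P (φ' + a φ)`
vanishes at `0` and has derivative `e^{-ar} P φ (2a² coth (r / ρ) - a² - λ)`, which is positive
while `φ > 0` because `coth > 1`; at a first zero of `φ` it would equal `e^{-ar} P φ' ≤ 0`.

For `μ < ν` the Wronskian `P (φ_μ' φ_ν - φ_μ φ_ν')` vanishes at `0` and has derivative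
`(ν - μ) P φ_μ φ_ν > 0`, so `φ_μ / φ_ν` increases strictly from `1`. Applied to the real parts of
two complex solutions, this separates them at every `r > 0`.
-/

open MeasureTheory Set Real Filter Topology Asymptotics intervalIntegral

theorem exists_tendsto_nhdsGT_zero_of_hasDerivAt {h h' : ℝ → ℝ}
    (hh : ∀ s, 0 < s → HasDerivAt h (h' s) s) (hh' : ContinuousOn h' (Ici 0)) :
    ∃ L, Tendsto h (𝓝[>] 0) (𝓝 L) := by
  have hint : IntegrableOn h' (uIcc 0 1) :=
    (hh'.mono fun x hx => by simpa using hx.1).integrableOn_compact isCompact_uIcc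
  have htail : Tendsto (fun s => ∫ t in s..1, h' t) (𝓝[>] 0) (𝓝 (∫ t in 0..1, h' t)) :=
    (continuousOn_primitive_interval_left hint 0 left_mem_uIcc).tendsto.mono_left <|
      nhdsWithin_le_of_mem <| mem_of_superset (Ioc_mem_nhdsGT one_pos) fun x hx => by
        simpa [uIcc_of_le zero_le_one] using And.intro hx.1.le hx.2
  refine ⟨h 1 - ∫ t in 0..1, h' t, (tendsto_const_nhds.sub htail).congr' ?_⟩
  filter_upwards [self_mem_nhdsWithin] with s (hs : 0 < s)
  have hpos : ∀ x ∈ uIcc s 1, 0 < x := fun x hx => lt_of_lt_of_le (lt_min hs one_pos) hx.1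
  rw [integral_eq_sub_of_hasDerivAt (fun x hx => hh x (hpos x hx))
    ((hh'.mono fun x hx => (hpos x hx).le).intervalIntegrable)]
  ring

theorem tendsto_atBot_of_div_le_deriv {g g' : ℝ → ℝ} {c : ℝ} (hc : 0 < c)
    (hg : ∀ᶠ s in 𝓝[>] 0, HasDerivAt g (g' s) s) (hg' : ∀ᶠ s in 𝓝[>] 0, c / s ≤ g' s) :
    Tendsto g (𝓝[>] 0) atBot := by
  obtain ⟨ε, hε : 0 < ε, hsub⟩ := mem_nhdsGT_iff_exists_Ioo_subset.1 (hg.and hg')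
  have hmono : MonotoneOn (fun s => g s - c * log s) (Ioo 0 ε) := by
    have hderiv : ∀ s ∈ Ioo 0 ε, HasDerivAt (fun s => g s - c * log s) (g' s - c * s⁻¹) s :=
      fun s hs => (hsub hs).1.sub ((hasDerivAt_log hs.1.ne').const_mul c)
    refine monotoneOn_of_hasDerivWithinAt_nonneg (convex_Ioo 0 ε)
      (fun s hs => (hderiv s hs).continuousAt.continuousWithinAt)
      (fun s hs => (hderiv s (interior_subset hs)).hasDerivWithinAt) fun s hs => ?_
    rw [interior_Ioo] at hs
    simpa [div_eq_mul_inv] using (hsub hs).2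
  have hε2 : ε / 2 ∈ Ioo 0 ε := ⟨by linarith, by linarith⟩
  have hlog : Tendsto (fun s => g (ε / 2) - c * log (ε / 2) + c * log s) (𝓝[>] 0) atBot :=
    tendsto_atBot_add_const_left _ _ (tendsto_log_nhdsGT_zero.const_mul_atBot hc)
  refine tendsto_atBot_mono' _ ?_ hlog
  filter_upwards [Ioo_mem_nhdsGT (half_pos hε)] with s hs
  have := hmono ⟨hs.1, by linarith [hs.2]⟩ hε2 hs.2.le
  simp only at this
  linarith

theorem eq_zero_of_tendsto_mul_deriv {p g g' : ℝ → ℝ} {a L : ℝ}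
    (hp : ∀ᶠ s in 𝓝[>] 0, 0 < p s) (hpO : p =O[𝓝[>] 0] id) (hg : Tendsto g (𝓝[>] 0) (𝓝 a))
    (hg' : ∀ᶠ s in 𝓝[>] 0, HasDerivAt g (g' s) s)
    (hL : Tendsto (fun s => p s * g' s) (𝓝[>] 0) (𝓝 L)) : L = 0 := by
  wlog hL0 : 0 < L generalizing g g' a L
  · rcases (not_lt.1 hL0).lt_or_eq with hneg | h
    · have := this (g' := fun s => -g' s) hg.neg (hg'.mono fun s hs => hs.neg)
        (by simpa only [mul_neg] using hL.neg) (by linarith)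
      linarith
    · exact h
  obtain ⟨C, hC, hpC⟩ := hpO.exists_pos
  refine absurd (tendsto_atBot_of_div_le_deriv (div_pos hL0 (mul_pos two_pos hC)) hg' ?_)
    (not_tendsto_atBot_of_tendsto_nhds hg)
  filter_upwards [hp, hpC.bound, hL.eventually (lt_mem_nhds (half_lt_self hL0)),
    self_mem_nhdsWithin] with s hps hpCs hLs (hs : 0 < s)
  rw [Real.norm_of_nonneg hps.le, id, Real.norm_of_nonneg hs.le] at hpCs
  rw [div_div, div_le_iff₀ (by positivity)]
  have hg's : 0 < g' s := pos_of_mul_pos_right (by linarith) hps.le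
  nlinarith [mul_le_mul_of_nonneg_left hpCs hg's.le]

theorem pos_of_tendsto_zero_of_deriv_pos {Z Z' : ℝ → ℝ} {b : ℝ} (hb : 0 < b)
    (hZ : ∀ r ∈ Ioc 0 b, HasDerivAt Z (Z' r) r) (hZ' : ∀ r ∈ Ioo 0 b, 0 < Z' r)
    (h0 : Tendsto Z (𝓝[>] 0) (𝓝 0)) : 0 < Z b := by
  have hmono : StrictMonoOn Z (Ioc 0 b) := by
    refine strictMonoOn_of_deriv_pos (convex_Ioc 0 b)
      (fun r hr => (hZ r hr).continuousAt.continuousWithinAt) fun r hr => ?_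
    rw [interior_Ioc] at hr
    rw [(hZ r (Ioo_subset_Ioc_self hr)).deriv]
    exact hZ' r hr
  have hmid : b / 2 ∈ Ioc 0 b := ⟨half_pos hb, half_le_self hb.le⟩
  calc 0 ≤ Z (b / 2) := le_of_tendsto h0 <| by
        filter_upwards [Ioo_mem_nhdsGT (half_pos hb)] with s hs
        exact (hmono ⟨hs.1, hs.2.le.trans hmid.2⟩ hmid hs.2).le
    _ < Z b := hmono hmid ⟨hb, le_rfl⟩ (half_lt_self hb)

theorem exists_zero_forall_pos_Ico {g : ℝ → ℝ} {a b : ℝ} (hab : a ≤ b)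
    (hg : ContinuousOn g (Icc a b)) (ha : 0 < g a) (hb : g b ≤ 0) :
    ∃ c ∈ Ioc a b, g c = 0 ∧ ∀ x ∈ Ico a c, 0 < g x := by
  have hzero : ∀ x ∈ Icc a b, g x ≤ 0 → ∃ y ∈ Icc a x, g y = 0 := fun x hx hgx =>
    intermediate_value_Icc' hx.1 (hg.mono (Icc_subset_Icc_right hx.2)) ⟨hgx, ha.le⟩
  set S := Icc a b ∩ g ⁻¹' {0}
  have hbdd : BddBelow S := ⟨a, fun x hx => hx.1.1⟩
  have hc : sInf S ∈ S := by
    obtain ⟨y, hy, hgy⟩ := hzero b (right_mem_Icc.2 hab) hb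
    exact (hg.preimage_isClosed_of_isClosed isClosed_Icc isClosed_singleton).csInf_mem
      ⟨y, hy, hgy⟩ hbdd
  have hpos : ∀ x ∈ Ico a (sInf S), 0 < g x := by
    intro x hx
    by_contra! hgx
    obtain ⟨y, hy, hgy⟩ := hzero x ⟨hx.1, hx.2.le.trans hc.1.2⟩ hgx
    exact (hy.2.trans_lt hx.2).not_ge
      (csInf_le hbdd ⟨⟨hy.1, hy.2.trans (hx.2.le.trans hc.1.2)⟩, hgy⟩)
  exact ⟨sInf S, ⟨hc.1.1.lt_of_ne fun h => ha.ne' (h ▸ hc.2), hc.1.2⟩, hc.2, hpos⟩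

theorem HasDerivAt.nonpos_of_eq_zero_of_pos_left {g : ℝ → ℝ} {g' c : ℝ} (hd : HasDerivAt g g' c)
    (hc : g c = 0) (hpos : ∀ᶠ x in 𝓝[<] c, 0 < g x) : g' ≤ 0 := by
  refine le_of_tendsto (hasDerivAt_iff_tendsto_slope_left_right.1 hd).1 ?_
  filter_upwards [hpos, self_mem_nhdsWithin] with x hgx (hx : x < c)
  rw [slope_def_field, hc]
  exact div_nonpos_of_nonneg_of_nonpos (by linarith) (by linarith)

noncomputable def radialWeight (k : ℕ) (ρ s : ℝ) : ℝ := sinh (s / ρ) ^ k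

section radialWeight

variable {k : ℕ} {ρ s : ℝ}

theorem radialWeight_pos (hρ : 0 < ρ) (hs : 0 < s) : 0 < radialWeight k ρ s :=
  pow_pos (sinh_pos_iff.2 (div_pos hs hρ)) k

theorem radialWeight_zero (hk : k ≠ 0) : radialWeight k ρ 0 = 0 := by
  simp [radialWeight, hk]

theorem differentiable_radialWeight : Differentiable ℝ (radialWeight k ρ) := by
  unfold radialWeight
  fun_prop

theorem hasDerivAt_radialWeight (hs : sinh (s / ρ) ≠ 0) :
    HasDerivAt (radialWeight k ρ)
      (k / ρ * (cosh (s / ρ) / sinh (s / ρ)) * radialWeight k ρ s) s := by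
  refine ((((hasDerivAt_id s).div_const ρ).sinh).pow k).congr_deriv ?_
  rcases k with _ | k
  · simp
  · simp only [radialWeight, id, Nat.cast_add, Nat.cast_one, add_tsub_cancel_right]
    field_simp
    ring

theorem isBigO_radialWeight_id (hk : k ≠ 0) : radialWeight k ρ =O[𝓝 0] id := by
  have h := (differentiable_radialWeight (k := k) (ρ := ρ) 0).hasDerivAt.isBigO_sub
  simp only [radialWeight_zero hk, sub_zero] at h
  exact h

end radialWeight

structure IsRadialEigenfunction {E : Type*} [NormedAddCommGroup E] [NormedSpace ℝ E]
    (k : ℕ) (ρ lam : ℝ) (g : ℝ → E) : Prop where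
  continuousOn : ContinuousOn g (Ici 0)
  differentiableAt : ∀ r, 0 < r → DifferentiableAt ℝ g r
  differentiableAt_deriv : ∀ r, 0 < r → DifferentiableAt ℝ (deriv g) r
  ode : ∀ r, 0 < r →
    deriv (deriv g) r + (k / ρ * (cosh (r / ρ) / sinh (r / ρ))) • deriv g r + lam • g r = 0

namespace IsRadialEigenfunction

variable {E F : Type*} [NormedAddCommGroup E] [NormedSpace ℝ E] [NormedAddCommGroup F]
  [NormedSpace ℝ F] {k : ℕ} {ρ lam : ℝ}

theorem of_complex {φ : ℝ → ℂ} (hcont : ContinuousOn φ (Ici 0))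
    (hdiff : ∀ r : ℝ, 0 < r → DifferentiableAt ℝ φ r ∧ DifferentiableAt ℝ (deriv φ) r)
    (heq : ∀ r : ℝ, 0 < r →
      deriv (deriv φ) r + ((k : ℂ) / (ρ : ℂ)) * ((cosh (r / ρ) / sinh (r / ρ) : ℝ) : ℂ) *
        deriv φ r + (lam : ℂ) * φ r = 0) :
    IsRadialEigenfunction k ρ lam φ where
  continuousOn := hcont
  differentiableAt r hr := (hdiff r hr).1
  differentiableAt_deriv r hr := (hdiff r hr).2
  ode r hr := by simpa only [Complex.real_smul, Complex.ofReal_mul, Complex.ofReal_div,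
    Complex.ofReal_natCast] using heq r hr

theorem comp_clm {g : ℝ → E} (hg : IsRadialEigenfunction k ρ lam g) (L : E →L[ℝ] F) :
    IsRadialEigenfunction k ρ lam (L ∘ g) := by
  have hderiv : ∀ r, 0 < r → HasDerivAt (L ∘ g) (L (deriv g r)) r := fun r hr =>
    L.hasFDerivAt.comp_hasDerivAt r (hg.differentiableAt r hr).hasDerivAt
  have hderiv_eq : ∀ r, 0 < r → deriv (L ∘ g) =ᶠ[𝓝 r] L ∘ deriv g := fun r hr => by
    filter_upwards [Ioi_mem_nhds hr] with s hs
    exact (hderiv s hs).deriv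
  have hderiv2 : ∀ r, 0 < r → HasDerivAt (deriv (L ∘ g)) (L (deriv (deriv g) r)) r :=
    fun r hr => (L.hasFDerivAt.comp_hasDerivAt r
      (hg.differentiableAt_deriv r hr).hasDerivAt).congr_of_eventuallyEq (hderiv_eq r hr)
  refine ⟨L.continuous.comp_continuousOn hg.continuousOn,
    fun r hr => (hderiv r hr).differentiableAt, fun r hr => (hderiv2 r hr).differentiableAt,
    fun r hr => ?_⟩
  rw [(hderiv2 r hr).deriv, (hderiv r hr).deriv]
  simpa using congrArg L (hg.ode r hr)

variable {g : ℝ → ℝ}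

theorem tendsto_nhdsGT_zero (hg : IsRadialEigenfunction k ρ lam g) :
    Tendsto g (𝓝[>] 0) (𝓝 (g 0)) :=
  (hg.continuousOn 0 self_mem_Ici).tendsto.mono_left (nhdsWithin_mono _ Ioi_subset_Ici_self)

theorem hasDerivAt_radialWeight_mul_deriv (hg : IsRadialEigenfunction k ρ lam g) (hρ : 0 < ρ)
    {r : ℝ} (hr : 0 < r) :
    HasDerivAt (fun s => radialWeight k ρ s * deriv g s)
      (-(lam * (radialWeight k ρ r * g r))) r := by
  refine ((hasDerivAt_radialWeight (sinh_pos_iff.2 (div_pos hr hρ)).ne').mul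
    (hg.differentiableAt_deriv r hr).hasDerivAt).congr_deriv ?_
  have h := hg.ode r hr
  simp only [smul_eq_mul] at h
  linear_combination radialWeight k ρ r * h

theorem tendsto_radialWeight_mul_deriv (hg : IsRadialEigenfunction k ρ lam g) (hk : k ≠ 0)
    (hρ : 0 < ρ) : Tendsto (fun s => radialWeight k ρ s * deriv g s) (𝓝[>] 0) (𝓝 0) := by
  obtain ⟨L, hL⟩ := exists_tendsto_nhdsGT_zero_of_hasDerivAt
    (fun s hs => hg.hasDerivAt_radialWeight_mul_deriv hρ hs)
    (continuousOn_const.mul (differentiable_radialWeight.continuous.continuousOn.mul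
      hg.continuousOn)).neg
  have hpos : ∀ᶠ s in 𝓝[>] 0, 0 < radialWeight k ρ s :=
    eventually_nhdsWithin_of_forall fun s hs => radialWeight_pos hρ hs
  have hderiv : ∀ᶠ s in 𝓝[>] 0, HasDerivAt g (deriv g s) s :=
    eventually_nhdsWithin_of_forall fun s hs => (hg.differentiableAt s hs).hasDerivAt
  rwa [eq_zero_of_tendsto_mul_deriv hpos ((isBigO_radialWeight_id hk).mono nhdsWithin_le_nhds)
    hg.tendsto_nhdsGT_zero hderiv hL] at hL

theorem hasDerivAt_exp_mul_radialWeight_mul_deriv_add (hg : IsRadialEigenfunction k ρ lam g)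
    (hρ : 0 < ρ) (a : ℝ) {s : ℝ} (hs : 0 < s) :
    HasDerivAt
      (fun s => exp (-(a * s)) * (radialWeight k ρ s * deriv g s + a * (radialWeight k ρ s * g s)))
      (exp (-(a * s)) * (radialWeight k ρ s * g s) *
        (a * (k / ρ) * (cosh (s / ρ) / sinh (s / ρ)) - a ^ 2 - lam)) s := by
  have hexp := ((hasDerivAt_id' s).const_mul a).fun_neg.exp
  have hPg := (hasDerivAt_radialWeight (k := k) (sinh_pos_iff.2 (div_pos hs hρ)).ne').fun_mul
    (hg.differentiableAt s hs).hasDerivAt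
  refine (hexp.fun_mul ((hg.hasDerivAt_radialWeight_mul_deriv hρ hs).fun_add
    (hPg.const_mul a))).congr_deriv ?_
  ring

theorem pos (hg : IsRadialEigenfunction k ρ lam g) (hk : k ≠ 0) (hρ : 0 < ρ)
    (hlam : lam ≤ k ^ 2 / (4 * ρ ^ 2)) (h0 : 0 < g 0) {r : ℝ} (hr : 0 ≤ r) : 0 < g r := by
  by_contra! hgr
  obtain ⟨c, hc, hgc, hpos⟩ :=
    exists_zero_forall_pos_Ico hr (hg.continuousOn.mono Icc_subset_Ici_self) h0 hgr
  set a : ℝ := k / (2 * ρ)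
  set P := radialWeight k ρ
  set Z : ℝ → ℝ := fun s => exp (-(a * s)) * (P s * deriv g s + a * (P s * g s))
  have hZ0 : Tendsto Z (𝓝[>] 0) (𝓝 0) := by
    have hP : Tendsto P (𝓝[>] 0) (𝓝 0) := by
      simpa [P, radialWeight_zero hk] using
        ((differentiable_radialWeight (k := k) (ρ := ρ)).continuous.tendsto 0).mono_left
          nhdsWithin_le_nhds
    have hexp : Tendsto (fun s => exp (-(a * s))) (𝓝[>] 0) (𝓝 1) := by
      simpa using ((continuous_const.mul continuous_id).neg.rexp.tendsto 0).mono_left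
        nhdsWithin_le_nhds
    simpa using hexp.mul ((hg.tendsto_radialWeight_mul_deriv hk hρ).add
      ((hP.mul hg.tendsto_nhdsGT_zero).const_mul a))
  have hZc : 0 < Z c := by
    refine pos_of_tendsto_zero_of_deriv_pos hc.1
      (fun s hs => hg.hasDerivAt_exp_mul_radialWeight_mul_deriv_add hρ a hs.1)
      (fun s hs => ?_) hZ0
    have hcoth : 1 < cosh (s / ρ) / sinh (s / ρ) :=
      (one_lt_div (sinh_pos_iff.2 (div_pos hs.1 hρ))).2 (sinh_lt_cosh _)
    have ha : 0 < a := div_pos (by exact_mod_cast Nat.pos_of_ne_zero hk) (by positivity)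
    have hak : a * (k / ρ) = 2 * a ^ 2 := by simp only [a]; field_simp
    have hlam' : lam ≤ a ^ 2 := hlam.trans_eq (by simp only [a]; ring)
    have hPg : 0 < P s * g s := mul_pos (radialWeight_pos hρ hs.1) (hpos s ⟨hs.1.le, hs.2⟩)
    have : 0 < a * (k / ρ) * (cosh (s / ρ) / sinh (s / ρ)) - a ^ 2 - lam := by
      rw [hak]
      nlinarith [mul_lt_mul_of_pos_left hcoth (pow_pos ha 2)]
    positivity
  have hdc : deriv g c ≤ 0 :=
    (hg.differentiableAt c hc.1).hasDerivAt.nonpos_of_eq_zero_of_pos_left hgc <| by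
      filter_upwards [Ioo_mem_nhdsLT hc.1] with x hx using hpos x ⟨hx.1.le, hx.2⟩
  have : Z c ≤ 0 := by
    simp only [Z, hgc, mul_zero, add_zero]
    exact mul_nonpos_of_nonneg_of_nonpos (exp_pos _).le
      (mul_nonpos_of_nonneg_of_nonpos (radialWeight_pos hρ hc.1).le hdc)
  linarith

theorem apply_lt_of_lt {μ ν : ℝ} {u v : ℝ → ℝ} (hu : IsRadialEigenfunction k ρ μ u)
    (hv : IsRadialEigenfunction k ρ ν v) (hk : k ≠ 0) (hρ : 0 < ρ) (hμν : μ < ν)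
    (hν : ν ≤ k ^ 2 / (4 * ρ ^ 2)) (h0 : u 0 = v 0) (hv0 : 0 < v 0) {r : ℝ} (hr : 0 < r) :
    v r < u r := by
  have hupos : ∀ s, 0 ≤ s → 0 < u s := fun s hs =>
    hu.pos hk hρ (hμν.le.trans hν) (h0 ▸ hv0) hs
  have hvpos : ∀ s, 0 ≤ s → 0 < v s := fun s hs => hv.pos hk hρ hν hv0 hs
  set P := radialWeight k ρ
  set W : ℝ → ℝ := fun s => P s * deriv u s * v s - P s * deriv v s * u s
  have hW : ∀ s, 0 < s → HasDerivAt W ((ν - μ) * (P s * (u s * v s))) s := fun s hs =>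
    (((hu.hasDerivAt_radialWeight_mul_deriv hρ hs).fun_mul
      (hv.differentiableAt s hs).hasDerivAt).fun_sub
      ((hv.hasDerivAt_radialWeight_mul_deriv hρ hs).fun_mul
        (hu.differentiableAt s hs).hasDerivAt)).congr_deriv (by ring)
  have hW0 : Tendsto W (𝓝[>] 0) (𝓝 0) := by
    simpa using ((hu.tendsto_radialWeight_mul_deriv hk hρ).mul hv.tendsto_nhdsGT_zero).sub
      ((hv.tendsto_radialWeight_mul_deriv hk hρ).mul hu.tendsto_nhdsGT_zero)
  have hWpos : ∀ s, 0 < s → 0 < W s := fun s hs =>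
    pos_of_tendsto_zero_of_deriv_pos hs (fun t ht => hW t ht.1) (fun t ht =>
      mul_pos (sub_pos.2 hμν) (mul_pos (radialWeight_pos hρ ht.1)
        (mul_pos (hupos t ht.1.le) (hvpos t ht.1.le)))) hW0
  have hmono : StrictMonoOn (fun s => u s / v s) (Icc 0 r) := by
    refine strictMonoOn_of_deriv_pos (convex_Icc 0 r)
      ((hu.continuousOn.mono Icc_subset_Ici_self).div (hv.continuousOn.mono Icc_subset_Ici_self)
        fun s hs => (hvpos s hs.1).ne') fun s hs => ?_
    rw [interior_Icc] at hs
    rw [((hu.differentiableAt s hs.1).hasDerivAt.fun_div (hv.differentiableAt s hs.1).hasDerivAt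
      (hvpos s hs.1.le).ne').deriv]
    have hWs : W s = P s * (deriv u s * v s - u s * deriv v s) := by ring
    have := hWpos s hs.1
    rw [hWs] at this
    exact div_pos (pos_of_mul_pos_right this (radialWeight_pos hρ hs.1).le)
      (pow_pos (hvpos s hs.1.le) 2)
  have h1 : u 0 / v 0 < u r / v r := hmono (left_mem_Icc.2 hr.le) (right_mem_Icc.2 hr.le) hr
  rw [h0, div_self hv0.ne', one_lt_div (hvpos r hr.le)] at h1
  exact h1

end IsRadialEigenfunction

/-- Let `k ≥ 1`, `ρ > 0`, `κ = −1/ρ²`, and let `μ ≠ ν` be *real*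
eigenvalues with `μ, ν ≤ −κk²/4 = k²/(4ρ²)`.  If `φ_μ, φ_ν` are radial eigenfunctions
of the hyperbolic Laplacian (continuous on `[0,∞)`, twice differentiable on `(0,∞)`,
solving `φ'' + (k/ρ)·coth(r/ρ)·φ' + λφ = 0` on `(0,∞)`) with `φ_μ(0) = φ_ν(0) = 1`,
then `φ_μ(r) ≠ φ_ν(r)` for every `r > 0`; consequently, if the two eigenfunctions agree
at a single point `r₀ > 0`, then `μ = ν` and `φ_μ ≡ φ_ν` on `[0,∞)`. -/
theorem one_radius_theorem_real_eigenvalues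
    (k : ℕ) (hk : 1 ≤ k) (ρ : ℝ) (hρ : 0 < ρ)
    (μ ν : ℝ) (hμν : μ ≠ ν)
    (hμle : μ ≤ k ^ 2 / (4 * ρ ^ 2)) (hνle : ν ≤ k ^ 2 / (4 * ρ ^ 2))
    (φμ φν : ℝ → ℂ)
    (hμcont : ContinuousOn φμ (Set.Ici 0))
    (hνcont : ContinuousOn φν (Set.Ici 0))
    (hμdiff : ∀ r : ℝ, 0 < r → DifferentiableAt ℝ φμ r ∧ DifferentiableAt ℝ (deriv φμ) r)
    (hνdiff : ∀ r : ℝ, 0 < r → DifferentiableAt ℝ φν r ∧ DifferentiableAt ℝ (deriv φν) r)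
    (hμeq : ∀ r : ℝ, 0 < r →
      deriv (deriv φμ) r +
          ((k : ℂ) / (ρ : ℂ)) * ((Real.cosh (r / ρ) / Real.sinh (r / ρ) : ℝ) : ℂ) *
            deriv φμ r + (μ : ℂ) * φμ r = 0)
    (hνeq : ∀ r : ℝ, 0 < r →
      deriv (deriv φν) r +
          ((k : ℂ) / (ρ : ℂ)) * ((Real.cosh (r / ρ) / Real.sinh (r / ρ) : ℝ) : ℂ) *
            deriv φν r + (ν : ℂ) * φν r = 0)
    (hμ0 : φμ 0 = 1) (hν0 : φν 0 = 1) :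
    (∀ r : ℝ, 0 < r → φμ r ≠ φν r) ∧
      (∀ r₀ : ℝ, 0 < r₀ → φμ r₀ = φν r₀ → μ = ν ∧ ∀ r ∈ Set.Ici (0 : ℝ), φμ r = φν r) := by
  have hk0 : k ≠ 0 := Nat.one_le_iff_ne_zero.1 hk
  have hμ := (IsRadialEigenfunction.of_complex hμcont hμdiff hμeq).comp_clm Complex.reCLM
  have hν := (IsRadialEigenfunction.of_complex hνcont hνdiff hνeq).comp_clm Complex.reCLM
  have hre0 : (Complex.reCLM ∘ φμ) 0 = (Complex.reCLM ∘ φν) 0 := by simp [hμ0, hν0]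
  have hpos0 : ∀ φ : ℝ → ℂ, φ 0 = 1 → 0 < (Complex.reCLM ∘ φ) 0 := fun φ h => by simp [h]
  have hne : ∀ r, 0 < r → φμ r ≠ φν r := by
    intro r hr heq
    have hre : (Complex.reCLM ∘ φμ) r = (Complex.reCLM ∘ φν) r := by simp [heq]
    rcases hμν.lt_or_gt with h | h
    · exact (hμ.apply_lt_of_lt hν hk0 hρ h hνle hre0 (hpos0 φν hν0) hr).ne hre.symm
    · exact (hν.apply_lt_of_lt hμ hk0 hρ h hμle hre0.symm (hpos0 φμ hμ0) hr).ne hre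
  exact ⟨hne, fun r₀ hr₀ h => absurd h (hne r₀ hr₀)⟩
end
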